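/- arXiv:2512.05084 — 2 statements merged into one kernel-verified Lean document; each statement's English description precedes it below -/
import Mathlib

section
/- Let f : ℝ^d → ℝ be a real polynomial of degree at most Δ, with Δ ≥ 1, and fix x ∈ ℝ^d. For η ∈ ℝ define the gradient-descent iterates x_1(η) = x and x_{i+1}(η) = x_i(η) − η∇f(x_i(η)). Then for every i ≥ 2 and every coordinate j ∈ {1, …, d}, the map η ↦ (x_i(η))_j is a polynomial in η of degree at most Δ^{i−2}. -/
/-- Gradient-descent iterates: `gdIter f x η i` is the `(i+1)`-st iterate `x_{i+1}`,
so `gdIter f x η 0 = x₁ = x` and `x_{i+1} = x_i - η ∇f(x_i)`. -/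
noncomputable def gdIter {d : ℕ} (f : EuclideanSpace ℝ (Fin d) → ℝ)
    (x : EuclideanSpace ℝ (Fin d)) (η : ℝ) : ℕ → EuclideanSpace ℝ (Fin d)
  | 0 => x
  | i + 1 => gdIter f x η i - η • gradient f (gdIter f x η i)

/-- `f : ℝ^d → ℝ` is a real polynomial of (total) degree at most `Δ`. -/
def IsPolyDeg {d : ℕ} (Δ : ℕ) (f : EuclideanSpace ℝ (Fin d) → ℝ) : Prop :=
  ∃ P : MvPolynomial (Fin d) ℝ, P.totalDegree ≤ Δ ∧
    ∀ y : EuclideanSpace ℝ (Fin d), f y = MvPolynomial.eval (fun j => y j) P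

/-!
Since `f` is a polynomial `p` of degree at most `Δ`, the coordinates of `∇f` are the partial
derivatives `∂ⱼp`, of degree at most `Δ - 1`. Running the recursion with `η` as an indeterminate,
if the coordinates of `x_i` are polynomials of degree at most `D` in `η`, then those of
`x_{i+1} = x_i - η ∇f(x_i)` have degree at most `max D (1 + (Δ - 1) D)`, which is at most `Δ D`
once `D ≥ 1`. Since `x_2 = x - η ∇f(x)` has degree at most `1`, `x_i` has degree at most
`Δ^(i-2)`.
-/

open MvPolynomial

theorem MvPolynomial.totalDegree_pderiv_le {R σ : Type*} [CommSemiring R]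
    (p : MvPolynomial σ R) (i : σ) :
    (pderiv i p).totalDegree ≤ p.totalDegree - 1 := by
  refine Finset.sup_le fun m hm => ?_
  have hm' : m + Finsupp.single i 1 ∈ p.support := by
    rw [mem_support_iff, coeff_pderiv] at hm
    exact mem_support_iff.2 (left_ne_zero_of_mul hm)
  have h := le_totalDegree hm'
  change (m + Finsupp.single i 1).degree ≤ _ at h
  rw [map_add, Finsupp.degree_single] at h
  change m.degree ≤ _
  omega

theorem Polynomial.eval_mvPolynomial_aeval {R σ : Type*} [CommSemiring R]
    (q : σ → Polynomial R) (p : MvPolynomial σ R) (t : R) :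
    (MvPolynomial.aeval q p).eval t = MvPolynomial.eval (fun k => (q k).eval t) p := by
  rw [← coe_aeval_eq_eval, comp_aeval_apply]
  simp only [coe_aeval_eq_eval, MvPolynomial.aeval_eq_eval]

theorem MvPolynomial.hasFDerivAt_eval {𝕜 σ : Type*} [NontriviallyNormedField 𝕜] [Fintype σ]
    (p : MvPolynomial σ 𝕜) (y : σ → 𝕜) :
    HasFDerivAt (fun z => eval z p)
      (∑ j, eval y (pderiv j p) • (ContinuousLinearMap.proj j : (σ → 𝕜) →L[𝕜] 𝕜)) y := by
  classical
  induction p using MvPolynomial.induction_on with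
  | C a =>
    simp only [eval_C]
    refine (hasFDerivAt_const (𝕜 := 𝕜) a y).congr_fderiv ?_
    ext v
    simp
  | add p q hp hq =>
    simp only [map_add]
    refine (hp.add hq).congr_fderiv ?_
    ext v
    simp [add_mul, Finset.sum_add_distrib]
  | mul_X p i hp =>
    simp only [map_mul, eval_X]
    refine (hp.mul (hasFDerivAt_apply i y)).congr_fderiv ?_
    ext v
    simp [pderiv_X, Pi.single_apply, Finset.mul_sum, add_mul, Finset.sum_add_distrib, apply_ite,
      mul_assoc]

theorem MvPolynomial.hasGradientAt_eval {σ : Type*} [Fintype σ] (p : MvPolynomial σ ℝ)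
    (y : EuclideanSpace ℝ σ) :
    HasGradientAt (fun z : EuclideanSpace ℝ σ => eval z.ofLp p)
      (WithLp.toLp 2 fun j => eval y.ofLp (pderiv j p)) y := by
  rw [hasGradientAt_iff_hasFDerivAt]
  refine ((hasFDerivAt_eval p y.ofLp).comp y
    (PiLp.continuousLinearEquiv 2 ℝ fun _ : σ => ℝ).hasFDerivAt).congr_fderiv ?_
  ext v
  simp [PiLp.inner_apply, mul_comm]

section gdIterPoly

variable {R σ : Type*} [CommRing R]

/-- The gradient-descent iterates of `eval · p` from `x`, with the step size replaced by the
indeterminate `X`. -/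
noncomputable def gdIterPoly (p : MvPolynomial σ R) (x : σ → R) : ℕ → σ → Polynomial R
  | 0 => fun j => Polynomial.C (x j)
  | n + 1 => fun j => gdIterPoly p x n j - Polynomial.X * aeval (gdIterPoly p x n) (pderiv j p)

variable {p : MvPolynomial σ R} {x : σ → R} {Δ : ℕ}

theorem natDegree_gdIterPoly_succ_le {n D : ℕ} (hp : p.totalDegree ≤ Δ)
    (hn : ∀ k, (gdIterPoly p x n k).natDegree ≤ D) (j : σ) :
    (gdIterPoly p x (n + 1) j).natDegree ≤ max D (1 + (Δ - 1) * D) := by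
  refine (Polynomial.natDegree_sub_le _ _).trans (max_le_max (hn j) ?_)
  refine Polynomial.natDegree_mul_le.trans (add_le_add Polynomial.natDegree_X_le ?_)
  exact aeval_natDegree_le _ ((totalDegree_pderiv_le p j).trans (Nat.sub_le_sub_right hp 1)) _ hn

theorem natDegree_gdIterPoly_le (hΔ : 1 ≤ Δ) (hp : p.totalDegree ≤ Δ) (n : ℕ) (j : σ) :
    (gdIterPoly p x (n + 1) j).natDegree ≤ Δ ^ n := by
  induction n generalizing j with
  | zero =>
    simpa using natDegree_gdIterPoly_succ_le (n := 0) (D := 0) hp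
      (fun k => (Polynomial.natDegree_C (x k)).le) j
  | succ n ih =>
    refine (natDegree_gdIterPoly_succ_le hp ih j).trans (max_le ?_ ?_)
    · exact Nat.pow_le_pow_right hΔ n.le_succ
    · obtain ⟨m, rfl⟩ := Nat.exists_eq_add_of_le' hΔ
      have hpow : 1 ≤ (m + 1) ^ n := Nat.one_le_pow n (m + 1) m.succ_pos
      rw [pow_succ, Nat.add_sub_cancel]
      nlinarith

end gdIterPoly

theorem gdIter_ofLp_eq_eval_gdIterPoly {d : ℕ} {f : EuclideanSpace ℝ (Fin d) → ℝ}
    {p : MvPolynomial (Fin d) ℝ} (hf : ∀ y, f y = eval y.ofLp p) (x : EuclideanSpace ℝ (Fin d))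
    (η : ℝ) (n : ℕ) :
    (gdIter f x η n).ofLp = fun j => (gdIterPoly p x.ofLp n j).eval η := by
  obtain rfl : f = fun z => eval z.ofLp p := funext hf
  induction n with
  | zero => funext j; simp [gdIter, gdIterPoly]
  | succ n ih =>
    funext j
    simp [gdIter, gdIterPoly, (hasGradientAt_eval p _).gradient,
      Polynomial.eval_mvPolynomial_aeval, ih]

/-- For a polynomial objective `f` of degree at most `Δ`, each coordinate of the `i`-th
gradient-descent iterate is a polynomial in the step size `η` of degree at most `Δ^(i-2)`,
for every `i ≥ 2`. -/
theorem gd_poly_iterate_polynomial_in_stepsize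
    {d Δ : ℕ} (hΔ : 1 ≤ Δ) (f : EuclideanSpace ℝ (Fin d) → ℝ) (hf : IsPolyDeg Δ f)
    (x : EuclideanSpace ℝ (Fin d)) :
    ∀ i : ℕ, 2 ≤ i → ∀ j : Fin d,
      ∃ P : Polynomial ℝ, P.natDegree ≤ Δ ^ (i - 2) ∧
        ∀ η : ℝ, gdIter f x η (i - 1) j = Polynomial.eval η P := by
  intro i hi j
  obtain ⟨p, hp, hfp⟩ := hf
  obtain ⟨n, rfl⟩ : ∃ n, i = n + 2 := ⟨i - 2, by omega⟩
  refine ⟨gdIterPoly p x.ofLp (n + 1) j, natDegree_gdIterPoly_le hΔ hp n j, fun η => ?_⟩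
  exact congrFun (gdIter_ofLp_eq_eval_gdIterPoly hfp x η (n + 1)) j
end

section
/- Let f : ℝ^d → ℝ be a real polynomial of degree at most Δ, with Δ ≥ 1, fix x ∈ ℝ^d and θ > 0, and for η ∈ ℝ define the gradient-descent iterates x_1(η) = x and x_{i+1}(η) = x_i(η) − η∇f(x_i(η)). Then for every i ≥ 1, the set {η ∈ ℝ : ‖∇f(x_i(η))‖² < θ²} is a union of at most Δ^{i−1} + 1 open intervals (possibly unbounded). -/
/-!
Each coordinate of the iterate `x_{n+1}(η)` is a polynomial in `η` of degree at most
`1 + Δ + ⋯ + Δ^(n-1)`, because one step adds `η` times the gradient, a polynomial map of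
degree `≤ Δ - 1` applied to the previous iterate. Hence `‖∇f(x_{n+1}(η))‖² - θ²` is a polynomial `p(η)` of degree at most
`2 (Δ^n - 1)`. The set `{p < 0}` is the union of those gaps between consecutive distinct roots
of `p` on which `p` is negative. Two adjacent negative gaps meet at a local maximum of `p` with
value `0`, i.e. at a multiple root, so counting roots with multiplicity shows that there are at
most `deg p / 2 + 1` negative gaps.
-/

open Polynomial Set Filter Topology

namespace MvPolynomial

section Degree

variable {σ R : Type*} [CommSemiring R]

theorem totalDegree_pderiv_le_s4 (p : MvPolynomial σ R) (i : σ) :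
    (pderiv i p).totalDegree ≤ p.totalDegree - 1 := by
  classical
  refine Finset.sup_le fun m hm => ?_
  have hm' : m + Finsupp.single i 1 ∈ p.support := by
    rw [mem_support_iff, coeff_pderiv] at hm
    exact mem_support_iff.2 (left_ne_zero_of_mul hm)
  have := le_totalDegree hm'
  rw [Finsupp.sum_add_index' (fun _ => rfl) (fun _ _ _ => rfl),
    Finsupp.sum_single_index rfl] at this
  omega

theorem natDegree_aeval_le {p : MvPolynomial σ R} {q : σ → R[X]} {e : ℕ}
    (hq : ∀ i, (q i).natDegree ≤ e) : (aeval q p).natDegree ≤ p.totalDegree * e := by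
  rw [aeval_def, eval₂_eq]
  refine natDegree_sum_le_of_forall_le _ _ fun m hm => ?_
  refine natDegree_C_mul_le _ _ |>.trans <| natDegree_prod_le _ _ |>.trans ?_
  calc ∑ i ∈ m.support, (q i ^ m i).natDegree
      ≤ ∑ i ∈ m.support, m i * e := Finset.sum_le_sum fun i _ =>
        natDegree_pow_le.trans (Nat.mul_le_mul_left _ (hq i))
    _ = (m.sum fun _ k => k) * e := by rw [Finsupp.sum, Finset.sum_mul]
    _ ≤ p.totalDegree * e := Nat.mul_le_mul_right _ (le_totalDegree hm)

theorem eval_aeval (p : MvPolynomial σ R) (q : σ → R[X]) (t : R) :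
    (aeval q p).eval t = eval (fun i => (q i).eval t) p := by
  rw [← Polynomial.coe_aeval_eq_eval, ← AlgHom.comp_apply, comp_aeval]
  simp [aeval_eq_eval]

end Degree

variable {𝕜 σ : Type*} [NontriviallyNormedField 𝕜] [Fintype σ]

theorem hasFDerivAt_eval_s4 (p : MvPolynomial σ 𝕜) (y : σ → 𝕜) :
    HasFDerivAt (fun z => eval z p)
      (∑ j, eval y (pderiv j p) • (ContinuousLinearMap.proj j : (σ → 𝕜) →L[𝕜] 𝕜)) y := by
  classical
  induction p using MvPolynomial.induction_on with
  | C a =>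
    simp only [eval_C]
    exact (hasFDerivAt_const a y).congr_fderiv (by ext; simp)
  | add p q hp hq =>
    simp only [map_add]
    exact (hp.fun_add hq).congr_fderiv (by ext; simp [add_mul, Finset.sum_add_distrib])
  | mul_X p i hp =>
    simp only [eval_mul, eval_X]
    refine (hp.mul (hasFDerivAt_apply i y)).congr_fderiv ?_
    ext v
    simp [pderiv_X, Pi.single_apply, apply_ite, add_mul, Finset.sum_add_distrib, Finset.mul_sum,
      mul_assoc]

end MvPolynomial

theorem gradient_apply_eq_eval_pderiv {d : ℕ} {f : EuclideanSpace ℝ (Fin d) → ℝ}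
    {P : MvPolynomial (Fin d) ℝ} (hf : ∀ y, f y = MvPolynomial.eval (fun j => y j) P)
    (y : EuclideanSpace ℝ (Fin d)) (j : Fin d) :
    gradient f y j = MvPolynomial.eval (fun i => y i) (MvPolynomial.pderiv j P) := by
  obtain rfl : f = (fun z => MvPolynomial.eval z P) ∘ WithLp.ofLp := funext hf
  have hD := (P.hasFDerivAt_eval_s4 y.ofLp).comp y (PiLp.hasFDerivAt_ofLp (𝕜 := ℝ) 2 y)
  have := inner_gradient_right (𝕜 := ℝ) (x := EuclideanSpace.single j (1 : ℝ))
    (f := (fun z => MvPolynomial.eval z P) ∘ WithLp.ofLp) (y := y)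
  rw [EuclideanSpace.inner_single_left, hD.fderiv] at this
  simpa [Pi.single_apply] using this

section GradientDescentPolynomial

open MvPolynomial (pderiv)

variable {σ R : Type*} [CommRing R] {P : MvPolynomial σ R} {x : σ → R} {δ : ℕ}

noncomputable def gdPoly (P : MvPolynomial σ R) (x : σ → R) : ℕ → σ → R[X]
  | 0 => fun j => C (x j)
  | n + 1 => fun j => gdPoly P x n j - X * MvPolynomial.aeval (gdPoly P x n) (pderiv j P)

theorem natDegree_gdPoly_le (hP : ∀ j, (pderiv j P).totalDegree ≤ δ) (n : ℕ) (j : σ) :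
    (gdPoly P x n j).natDegree ≤ ∑ i ∈ Finset.range n, (δ + 1) ^ i := by
  induction n generalizing j with
  | zero => simp [gdPoly]
  | succ n ih =>
    have hstep : (MvPolynomial.aeval (gdPoly P x n) (pderiv j P)).natDegree ≤
        δ * ∑ i ∈ Finset.range n, (δ + 1) ^ i :=
      (MvPolynomial.natDegree_aeval_le ih).trans (Nat.mul_le_mul_right _ (hP j))
    rw [Finset.sum_range_succ, ← geom_sum_mul_add δ n]
    refine (natDegree_sub_le _ _).trans (max_le ((ih j).trans (Nat.le_add_right _ _)) ?_)
    refine (natDegree_mul_le.trans (add_le_add natDegree_X_le hstep)).trans ?_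
    rw [mul_comm]
    omega

theorem natDegree_aeval_gdPoly_pderiv_le (hP : ∀ j, (pderiv j P).totalDegree ≤ δ)
    (n : ℕ) (j : σ) :
    (MvPolynomial.aeval (gdPoly P x n) (pderiv j P)).natDegree ≤ (δ + 1) ^ n - 1 := by
  refine (MvPolynomial.natDegree_aeval_le (natDegree_gdPoly_le hP n)).trans ?_
  rw [← geom_sum_mul_add δ n, Nat.add_sub_cancel, mul_comm]
  exact Nat.mul_le_mul_left _ (hP j)

end GradientDescentPolynomial

theorem eval_gdPoly {d : ℕ} {f : EuclideanSpace ℝ (Fin d) → ℝ} {P : MvPolynomial (Fin d) ℝ}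
    (hf : ∀ y, f y = MvPolynomial.eval (fun j => y j) P) (x : EuclideanSpace ℝ (Fin d))
    (η : ℝ) (n : ℕ) (j : Fin d) :
    (gdPoly P x.ofLp n j).eval η = gdIter f x η n j := by
  induction n generalizing j with
  | zero => simp [gdPoly, gdIter]
  | succ n ih =>
    simp [gdPoly, gdIter, MvPolynomial.eval_aeval, ih, gradient_apply_eq_eval_pderiv hf]

section Gaps

variable {k : ℕ} (ρ : Fin k → ℝ)

/-- The open interval `(ρ (j - 1), ρ j)`, where `ρ (-1) = -∞` and `ρ k = +∞`. -/
def gap (j : Fin (k + 1)) : Set ℝ :=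
  ⋂ i, if i.castSucc < j then Ioi (ρ i) else Iio (ρ i)

variable {ρ}

theorem mem_gap {j : Fin (k + 1)} {y : ℝ} :
    y ∈ gap ρ j ↔ ∀ i, if i.castSucc < j then ρ i < y else y < ρ i := by
  simp only [gap, mem_iInter]
  exact forall_congr' fun i => by split_ifs <;> rfl

theorem isOpen_gap (j : Fin (k + 1)) : IsOpen (gap ρ j) :=
  isOpen_iInter_of_finite fun i => by split_ifs; exacts [isOpen_Ioi, isOpen_Iio]

theorem isPreconnected_gap (j : Fin (k + 1)) : IsPreconnected (gap ρ j) :=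
  (convex_iInter fun i => by split_ifs; exacts [convex_Ioi _, convex_Iio _]).isPreconnected

theorem ne_of_mem_gap {j : Fin (k + 1)} {y : ℝ} (hy : y ∈ gap ρ j) (i : Fin k) : ρ i ≠ y := by
  have := mem_gap.1 hy i
  split_ifs at this
  exacts [this.ne, this.ne']

theorem exists_mem_gap (hρ : StrictMono ρ) {y : ℝ} (hy : ∀ i, ρ i ≠ y) : ∃ j, y ∈ gap ρ j := by
  classical
  have hk : ∃ m, ∀ i : Fin k, m ≤ (i : ℕ) → y < ρ i := ⟨k, fun i hi => absurd i.2 (by omega)⟩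
  refine ⟨⟨Nat.find hk, Nat.lt_succ_of_le (Nat.find_min' hk fun i hi => absurd i.2 (by omega))⟩,
    mem_gap.2 fun i => ?_⟩
  split_ifs with h
  · obtain ⟨i', hii', hi'⟩ := not_forall₂.1 (Nat.find_min hk (Fin.lt_def.1 h))
    exact lt_of_le_of_ne ((hρ.monotone (Fin.le_def.2 hii')).trans (not_lt.1 hi')) (hy i)
  · exact Nat.find_spec hk i (not_lt.1 (fun h' => h (Fin.lt_def.2 h')))

theorem eventually_mem_gap_castSucc_or_eq_or_mem_gap_succ (hρ : StrictMono ρ) (i : Fin k) :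
    ∀ᶠ y in 𝓝 (ρ i), y ∈ gap ρ i.castSucc ∨ y = ρ i ∨ y ∈ gap ρ i.succ := by
  have hnear : ∀ᶠ y in 𝓝 (ρ i), ∀ i', (i' < i → ρ i' < y) ∧ (i < i' → y < ρ i') := by
    refine eventually_all.2 fun i' => ?_
    rcases lt_trichotomy i' i with h | rfl | h
    · filter_upwards [eventually_gt_nhds (hρ h)] with y hy
      exact ⟨fun _ => hy, fun h' => (h.asymm h').elim⟩
    · exact .of_forall fun _ => ⟨fun h => (lt_irrefl _ h).elim, fun h => (lt_irrefl _ h).elim⟩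
    · filter_upwards [eventually_lt_nhds (hρ h)] with y hy
      exact ⟨fun h' => (h.asymm h').elim, fun _ => hy⟩
  filter_upwards [hnear] with y hy
  rcases lt_trichotomy y (ρ i) with h | h | h
  · refine Or.inl (mem_gap.2 fun i' => ?_)
    simp only [Fin.castSucc_lt_castSucc_iff]
    split_ifs with h'
    · exact (hy i').1 h'
    · rcases (not_lt.1 h').eq_or_lt with rfl | h'
      · exact h
      · exact (hy i').2 h'
  · exact Or.inr (Or.inl h)
  · refine Or.inr (Or.inr (mem_gap.2 fun i' => ?_))
    simp only [Fin.castSucc_lt_succ_iff]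
    split_ifs with h'
    · rcases h'.eq_or_lt with rfl | h'
      · exact h
      · exact (hy i').1 h'
    · exact (hy i').2 (not_le.1 h')

end Gaps

theorem IsPreconnected.neg_of_neg {α : Type*} [TopologicalSpace α] {s : Set α} {f : α → ℝ}
    (hs : IsPreconnected s) (hf : ContinuousOn f s) (hf0 : ∀ y ∈ s, f y ≠ 0) {a b : α}
    (ha : a ∈ s) (hb : b ∈ s) (hfa : f a < 0) : f b < 0 := by
  by_contra! hfb
  obtain ⟨c, hc, hfc⟩ := hs.intermediate_value ha hb hf ⟨hfa.le, hfb⟩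
  exact hf0 c hc hfc

theorem Finset.exists_fin_iUnion_eq_biUnion {α ι : Type*} {P : Set α → Prop} (hP : P ∅)
    {T : Finset ι} {S : ι → Set α} (hS : ∀ j ∈ T, P (S j)) {m : ℕ} (hm : T.card ≤ m) :
    ∃ S' : Fin m → Set α, (∀ k, P (S' k)) ∧ ⋃ j ∈ T, S j = ⋃ k, S' k := by
  classical
  let e := T.equivFin
  refine ⟨fun k => if h : (k : ℕ) < T.card then S (e.symm ⟨k, h⟩) else ∅, fun k => ?_, ?_⟩
  · dsimp only
    split_ifs
    exacts [hS _ (e.symm _).2, hP]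
  · ext y
    simp only [mem_iUnion]
    constructor
    · rintro ⟨j, hj, hy⟩
      refine ⟨⟨e ⟨j, hj⟩, (e ⟨j, hj⟩).2.trans_le hm⟩, ?_⟩
      simpa using hy
    · rintro ⟨k, hk⟩
      split_ifs at hk
      exacts [⟨_, (e.symm _).2, hk⟩, hk.elim]

theorem Polynomial.two_le_rootMultiplicity_of_isLocalMax {p : ℝ[X]} {r : ℝ} (hp : p ≠ 0)
    (hr : p.IsRoot r) (hmax : IsLocalMax (fun x => p.eval x) r) : 2 ≤ p.rootMultiplicity r :=
  (one_lt_rootMultiplicity_iff_isRoot hp).2 ⟨hr, by simpa using hmax.deriv_eq_zero⟩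

theorem Polynomial.sum_rootMultiplicity_le_natDegree {R : Type*} [CommRing R] [IsDomain R]
    (p : R[X]) (s : Finset R) : ∑ r ∈ s, p.rootMultiplicity r ≤ p.natDegree := by
  classical
  calc ∑ r ∈ s, p.rootMultiplicity r
      ≤ ∑ r ∈ s ∪ p.roots.toFinset, p.rootMultiplicity r :=
        Finset.sum_le_sum_of_subset Finset.subset_union_left
    _ = Multiset.card p.roots := by
        simp_rw [← count_roots]
        exact Multiset.sum_count_eq_card fun r hr => by simp [hr]
    _ ≤ p.natDegree := card_roots' p

section NegativeGaps

variable {p : ℝ[X]} {k : ℕ} {ρ : Fin k → ℝ}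

open Classical in
noncomputable def negGaps (p : ℝ[X]) (ρ : Fin k → ℝ) : Finset (Fin (k + 1)) :=
  {j | ∃ y ∈ gap ρ j, p.eval y < 0}

theorem mem_negGaps {j : Fin (k + 1)} : j ∈ negGaps p ρ ↔ ∃ y ∈ gap ρ j, p.eval y < 0 := by
  simp [negGaps]

theorem eval_neg_of_mem_negGaps (hroot : ∀ y, p.IsRoot y → ∃ i, ρ i = y) {j : Fin (k + 1)}
    (hj : j ∈ negGaps p ρ) {y : ℝ} (hy : y ∈ gap ρ j) : p.eval y < 0 := by
  obtain ⟨a, ha, hpa⟩ := mem_negGaps.1 hj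
  refine (isPreconnected_gap j).neg_of_neg p.continuous.continuousOn (fun z hz hpz => ?_) ha hy hpa
  obtain ⟨i, rfl⟩ := hroot z hpz
  exact ne_of_mem_gap hz i rfl

theorem setOf_eval_neg_eq_biUnion_gap (hρ : StrictMono ρ) (hρroot : ∀ i, p.IsRoot (ρ i))
    (hroot : ∀ y, p.IsRoot y → ∃ i, ρ i = y) :
    {y | p.eval y < 0} = ⋃ j ∈ negGaps p ρ, gap ρ j := by
  ext y
  simp only [mem_iUnion, exists_prop]
  refine ⟨fun hy => ?_, fun ⟨j, hj, hy⟩ => eval_neg_of_mem_negGaps hroot hj hy⟩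
  obtain ⟨j, hj⟩ := exists_mem_gap hρ fun i hi => hy.ne (hi ▸ hρroot i)
  exact ⟨j, mem_negGaps.2 ⟨y, hj, hy⟩, hj⟩

theorem ite_add_ite_mem_negGaps_le_rootMultiplicity (hp : p ≠ 0) (hρ : StrictMono ρ)
    (hρroot : ∀ i, p.IsRoot (ρ i)) (hroot : ∀ y, p.IsRoot y → ∃ i, ρ i = y) (i : Fin k) :
    (if i.castSucc ∈ negGaps p ρ then 1 else 0) + (if i.succ ∈ negGaps p ρ then 1 else 0) ≤
      p.rootMultiplicity (ρ i) := by
  have hpos : 0 < p.rootMultiplicity (ρ i) := (rootMultiplicity_pos hp).2 (hρroot i)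
  split_ifs with hl hr
  · refine two_le_rootMultiplicity_of_isLocalMax hp (hρroot i) ?_
    filter_upwards [eventually_mem_gap_castSucc_or_eq_or_mem_gap_succ hρ i] with y hy
    rw [(hρroot i).eq_zero]
    rcases hy with hy | rfl | hy
    exacts [(eval_neg_of_mem_negGaps hroot hl hy).le, (hρroot i).eq_zero.le,
      (eval_neg_of_mem_negGaps hroot hr hy).le]
  all_goals omega

theorem two_mul_card_negGaps_le (hp : p ≠ 0) (hρ : StrictMono ρ)
    (hρroot : ∀ i, p.IsRoot (ρ i)) (hroot : ∀ y, p.IsRoot y → ∃ i, ρ i = y) :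
    2 * (negGaps p ρ).card ≤ p.natDegree + 2 := by
  classical
  set g : Fin (k + 1) → ℕ := fun j => if j ∈ negGaps p ρ then 1 else 0
  have hcard : (negGaps p ρ).card = ∑ j, g j := by simp [g]
  have hadj : ∑ i : Fin k, (g i.castSucc + g i.succ) ≤ p.natDegree :=
    calc ∑ i, (g i.castSucc + g i.succ)
        ≤ ∑ i, p.rootMultiplicity (ρ i) := Finset.sum_le_sum fun i _ =>
          ite_add_ite_mem_negGaps_le_rootMultiplicity hp hρ hρroot hroot i
      _ = ∑ r ∈ Finset.univ.image ρ, p.rootMultiplicity r :=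
          (Finset.sum_image (f := (p.rootMultiplicity ·)) fun _ _ _ _ h => hρ.injective h).symm
      _ ≤ p.natDegree := p.sum_rootMultiplicity_le_natDegree _
  have hg : ∀ j, g j ≤ 1 := fun j => by dsimp only [g]; split_ifs <;> simp
  -- every gap except the two unbounded ones is counted twice in `hadj`
  rw [Finset.sum_add_distrib] at hadj
  have hcastSucc := Fin.sum_univ_castSucc g
  have hsucc := Fin.sum_univ_succ g
  have hfirst := hg 0
  have hlast := hg (Fin.last k)
  omega

end NegativeGaps

theorem Polynomial.exists_iUnion_eq_setOf_eval_neg (p : ℝ[X]) {m : ℕ}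
    (hm : p.natDegree + 2 ≤ 2 * m) :
    ∃ S : Fin m → Set ℝ, (∀ k, IsOpen (S k) ∧ IsPreconnected (S k)) ∧
      {y | p.eval y < 0} = ⋃ k, S k := by
  rcases eq_or_ne p 0 with rfl | hp
  · exact ⟨fun _ => ∅, fun _ => ⟨isOpen_empty, isPreconnected_empty⟩, by simp⟩
  let ρ := p.roots.toFinset.orderEmbOfFin rfl
  have hρroot : ∀ i, p.IsRoot (ρ i) := fun i =>
    (mem_roots hp).1 (Multiset.mem_toFinset.1 (p.roots.toFinset.orderEmbOfFin_mem rfl i))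
  have hroot : ∀ y, p.IsRoot y → ∃ i, ρ i = y := fun y hy => by
    rw [← Set.mem_range, Finset.range_orderEmbOfFin]
    simpa [mem_roots hp] using hy
  rw [setOf_eval_neg_eq_biUnion_gap ρ.strictMono hρroot hroot]
  exact Finset.exists_fin_iUnion_eq_biUnion (P := fun s => IsOpen s ∧ IsPreconnected s)
    ⟨isOpen_empty, isPreconnected_empty⟩ (fun j _ => ⟨isOpen_gap j, isPreconnected_gap j⟩)
    (by have := two_mul_card_negGaps_le hp ρ.strictMono hρroot hroot; omega)

theorem IsPolyDeg.exists_poly_norm_sq_gradient_gdIter {d Δ : ℕ}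
    {f : EuclideanSpace ℝ (Fin d) → ℝ} (hf : IsPolyDeg Δ f) (x : EuclideanSpace ℝ (Fin d))
    (n : ℕ) : ∃ p : ℝ[X], p.natDegree ≤ 2 * (Δ ^ n - 1) ∧
      ∀ η, ‖gradient f (gdIter f x η n)‖ ^ 2 = p.eval η := by
  obtain ⟨P, hP, hfP⟩ := hf
  have hpderiv : ∀ j, (MvPolynomial.pderiv j P).totalDegree ≤ Δ - 1 := fun j =>
    (P.totalDegree_pderiv_le_s4 j).trans (Nat.sub_le_sub_right hP 1)
  refine ⟨∑ j, MvPolynomial.aeval (gdPoly P x.ofLp n) (MvPolynomial.pderiv j P) ^ 2, ?_,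
    fun η => ?_⟩
  · refine natDegree_sum_le_of_forall_le _ _ fun j _ => natDegree_pow_le.trans ?_
    have hj := natDegree_aeval_gdPoly_pderiv_le (x := x.ofLp) hpderiv n j
    have hΔ : (Δ - 1 + 1) ^ n - 1 ≤ Δ ^ n - 1 := by rcases Δ with _ | Δ <;> simp
    omega
  · rw [EuclideanSpace.real_norm_sq_eq, eval_finsetSum]
    simp [MvPolynomial.eval_aeval, eval_gdPoly hfP, gradient_apply_eq_eval_pderiv hfP]

theorem gd_poly_sublevel_intervals_general
    {d Δ : ℕ} (f : EuclideanSpace ℝ (Fin d) → ℝ) (hf : IsPolyDeg Δ f)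
    (x : EuclideanSpace ℝ (Fin d)) (θ : ℝ) :
    ∀ i : ℕ, 1 ≤ i →
      ∃ S : Fin (Δ ^ (i - 1) + 1) → Set ℝ,
        (∀ k, IsOpen (S k) ∧ IsPreconnected (S k)) ∧
        {η : ℝ | ‖gradient f (gdIter f x η (i - 1))‖ ^ 2 < θ ^ 2} = ⋃ k, S k := by
  intro i _
  obtain ⟨p, hdeg, hp⟩ := hf.exists_poly_norm_sq_gradient_gdIter x (i - 1)
  obtain ⟨S, hS, hU⟩ := (p - C (θ ^ 2)).exists_iUnion_eq_setOf_eval_neg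
    (m := Δ ^ (i - 1) + 1) (by rw [natDegree_sub_C]; omega)
  refine ⟨S, hS, ?_⟩
  rw [← hU]
  ext η
  simp [hp]

/-- For a polynomial objective `f` of degree at most `Δ`, the set of step sizes `η` at which
the `i`-th iterate has squared gradient norm below `θ²` is a union of at most `Δ^(i-1) + 1`
open intervals (i.e. connected open subsets of `ℝ`, possibly unbounded or empty). -/
theorem gd_poly_sublevel_intervals
    {d Δ : ℕ} (hΔ : 1 ≤ Δ) (f : EuclideanSpace ℝ (Fin d) → ℝ) (hf : IsPolyDeg Δ f)
    (x : EuclideanSpace ℝ (Fin d)) (θ : ℝ) (hθ : 0 < θ) :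
    ∀ i : ℕ, 1 ≤ i →
      ∃ S : Fin (Δ ^ (i - 1) + 1) → Set ℝ,
        (∀ k, IsOpen (S k) ∧ IsPreconnected (S k)) ∧
        {η : ℝ | ‖gradient f (gdIter f x η (i - 1))‖ ^ 2 < θ ^ 2} = ⋃ k, S k :=
  gd_poly_sublevel_intervals_general f hf x θ
end
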